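/- arXiv:math/0512185 — 3 statements merged into one kernel-verified Lean document; each statement's English description precedes it below -/
import Mathlib

section
/- The function z ↦ -log((log ‖z‖²)²) is strictly plurisubharmonic on the open set {z ∈ ℂⁿ : 0 < ‖z‖ < 1}, i.e., its complex Hessian ∑_{j,k} ∂²u/∂z_j∂z̄_k w_j w̄_k is positive definite at every point of this set. -/
/-!
Along the real line `t ↦ z + t • v`, `‖z + t • v‖²` is the quadratic `a + b t + d t²` with
`a = ‖z‖²`, `b = 2 re ⟪z, v⟫`, `d = ‖v‖²`, and the chain rule for `φ(s) = -log((log s)²)`,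
with `φ'(s) = -2 / (s log s)` and `φ''(s) = 2 (log s + 1) / (s log s)²`, gives the second
derivative at `0` in closed form. Adding the directions `v = w` and `v = I • w` yields, up to the
positive factor `2 / (a log a)²`, `m + (-log a) (4 a d - m)` with `m = 4 |⟪z, w⟫|²`.
Since `log a < 0` and `m ≤ 4 a d` by Cauchy–Schwarz, both terms are nonnegative, and they cannot
both vanish because `d > 0`.
-/

open Complex Filter Topology

theorem deriv_iter_two_comp_of_eventually_hasDerivAt {φ φ' q q' : ℝ → ℝ} {φ'' q'' x y : ℝ}
    (hqx : q x = y) (hφ : ∀ᶠ s in 𝓝 y, HasDerivAt φ (φ' s) s) (hφ' : HasDerivAt φ' φ'' y)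
    (hq : ∀ᶠ t in 𝓝 x, HasDerivAt q (q' t) t) (hq' : HasDerivAt q' q'' x) :
    deriv^[2] (fun t => φ (q t)) x = φ'' * q' x ^ 2 + φ' y * q'' := by
  subst hqx
  have hqx := hq.self_of_nhds
  have hderiv : deriv (fun t => φ (q t)) =ᶠ[𝓝 x] fun t => φ' (q t) * q' t := by
    filter_upwards [hq, hqx.continuousAt.tendsto.eventually hφ] with t hqt hφt
    exact (hφt.comp t hqt).deriv
  rw [Function.iterate_succ_apply, Function.iterate_one, hderiv.deriv_eq]
  exact ((hφ'.comp x hqx).mul hq').deriv.trans (by rw [Function.comp_apply]; ring)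

theorem hasDerivAt_neg_log_log_sq {s : ℝ} (hs : 0 < s) (hs1 : s ≠ 1) :
    HasDerivAt (fun s => -Real.log (Real.log s ^ 2)) (-2 * (s * Real.log s)⁻¹) s := by
  have hlog : Real.log s ≠ 0 := Real.log_ne_zero_of_pos_of_ne_one hs hs1
  simp only [Real.log_pow, Nat.cast_ofNat]
  exact (((Real.hasDerivAt_log hs.ne').log hlog).const_mul 2).neg.congr_deriv (by field_simp)

theorem hasDerivAt_neg_two_mul_inv_mul_log {s : ℝ} (hs : 0 < s) (hs1 : s ≠ 1) :
    HasDerivAt (fun s => -2 * (s * Real.log s)⁻¹)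
      (2 * (Real.log s + 1) / (s * Real.log s) ^ 2) s := by
  have hlog : Real.log s ≠ 0 := Real.log_ne_zero_of_pos_of_ne_one hs hs1
  have hmul : HasDerivAt (fun s => s * Real.log s) (Real.log s + 1) s :=
    ((hasDerivAt_id s).mul (Real.hasDerivAt_log hs.ne')).congr_deriv (by simp [hs.ne'])
  exact ((hmul.inv (mul_ne_zero hs.ne' hlog)).const_mul (-2)).congr_deriv (by ring)

theorem deriv_iter_two_neg_log_log_sq_quadratic {a : ℝ} (ha : 0 < a) (ha1 : a ≠ 1) (b d : ℝ) :
    deriv^[2] (fun t : ℝ => -Real.log (Real.log (a + b * t + d * t ^ 2) ^ 2)) 0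
      = (2 * (Real.log a + 1) * b ^ 2 - 4 * d * (a * Real.log a)) / (a * Real.log a) ^ 2 := by
  have hq (t : ℝ) : HasDerivAt (fun t => a + b * t + d * t ^ 2) (b + 2 * d * t) t :=
    ((((hasDerivAt_id t).const_mul b).const_add a).add
      ((hasDerivAt_pow 2 t).const_mul d)).congr_deriv <| by
      simp only [mul_one, Nat.cast_ofNat, Nat.add_one_sub_one, pow_one, add_right_inj]
      ring
  have hq' : HasDerivAt (fun t : ℝ => b + 2 * d * t) (2 * d) 0 :=
    (((hasDerivAt_id (0 : ℝ)).const_mul (2 * d)).const_add b).congr_deriv (mul_one _)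
  have hφ : ∀ᶠ s in 𝓝 a,
      HasDerivAt (fun s => -Real.log (Real.log s ^ 2)) (-2 * (s * Real.log s)⁻¹) s := by
    filter_upwards [eventually_gt_nhds ha, eventually_ne_nhds ha1] with s hs hs1
    exact hasDerivAt_neg_log_log_sq hs hs1
  rw [deriv_iter_two_comp_of_eventually_hasDerivAt (by ring) hφ
    (hasDerivAt_neg_two_mul_inv_mul_log ha ha1) (Eventually.of_forall hq) hq']
  have hlog : Real.log a ≠ 0 := Real.log_ne_zero_of_pos_of_ne_one ha ha1
  field_simp
  ring

theorem norm_add_ofReal_smul_sq {E : Type*} [NormedAddCommGroup E] [InnerProductSpace ℂ E]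
    (z v : E) (t : ℝ) :
    ‖z + (t : ℂ) • v‖ ^ 2 = ‖z‖ ^ 2 + 2 * (inner ℂ z v).re * t + ‖v‖ ^ 2 * t ^ 2 := by
  rw [@norm_add_sq ℂ, inner_smul_right, RCLike.re_to_complex, re_ofReal_mul, norm_smul,
    norm_real, Real.norm_eq_abs, mul_pow, sq_abs]
  ring

theorem re_inner_sq_add_im_inner_sq_le {E : Type*} [NormedAddCommGroup E]
    [InnerProductSpace ℂ E] (z w : E) :
    (inner ℂ z w).re ^ 2 + (inner ℂ z w).im ^ 2 ≤ ‖z‖ ^ 2 * ‖w‖ ^ 2 := by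
  rw [← mul_pow, sq, sq, ← Complex.normSq_apply, Complex.normSq_eq_norm_sq]
  exact pow_le_pow_left₀ (norm_nonneg _) (norm_inner_le_norm z w) 2

theorem second_deriv_sum_pos_of_sq_add_sq_le {a d b₁ b₂ : ℝ} (ha : 0 < a) (ha1 : a < 1)
    (hd : 0 < d) (hb : b₁ ^ 2 + b₂ ^ 2 ≤ 4 * (a * d)) :
    0 < (2 * (Real.log a + 1) * b₁ ^ 2 - 4 * d * (a * Real.log a)) / (a * Real.log a) ^ 2
      + (2 * (Real.log a + 1) * b₂ ^ 2 - 4 * d * (a * Real.log a)) / (a * Real.log a) ^ 2 := by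
  have hL : Real.log a < 0 := Real.log_neg ha ha1
  rw [← add_div]
  refine div_pos ?_ (sq_pos_of_neg (mul_neg_of_pos_of_neg ha hL))
  nlinarith [mul_nonneg (neg_nonneg.2 hL.le) (sub_nonneg.2 hb),
    mul_pos (neg_pos.2 hL) (mul_pos ha hd), sq_nonneg b₁, sq_nonneg b₂]

/-- the function `u z = -log((log ‖z‖²)²)` is strictly plurisubharmonic on
`{z : 0 < ‖z‖ < 1}` in `ℂⁿ`: its Levi form, expressed as one quarter of the Laplacian of
the restriction `τ ↦ u (z + τ • w)` to the complex line through `z` in direction `w`,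
is strictly positive for every `w ≠ 0`. -/
theorem stmt1 (n : ℕ) (u : EuclideanSpace ℂ (Fin n) → ℝ)
    (hu : ∀ z, u z = -Real.log ((Real.log (‖z‖ ^ 2)) ^ 2))
    (z w : EuclideanSpace ℂ (Fin n)) (hz0 : 0 < ‖z‖) (hz1 : ‖z‖ < 1) (hw : w ≠ 0) :
    0 < (1 / 4 : ℝ) *
      (deriv^[2] (fun t : ℝ => u (z + (t : ℂ) • w)) 0 +
       deriv^[2] (fun t : ℝ => u (z + ((t : ℂ) * Complex.I) • w)) 0) := by
  have ha : 0 < ‖z‖ ^ 2 := pow_pos hz0 2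
  have ha1 : ‖z‖ ^ 2 < 1 := pow_lt_one₀ (norm_nonneg z) hz1 two_ne_zero
  simp only [hu, mul_smul, norm_add_ofReal_smul_sq,
    deriv_iter_two_neg_log_log_sq_quadratic ha ha1.ne, inner_smul_right, norm_smul, norm_I,
    one_mul, mul_re, I_re, I_im]
  have hd : 0 < ‖w‖ ^ 2 := pow_pos (norm_pos_iff.2 hw) 2
  refine mul_pos (by norm_num) (second_deriv_sum_pos_of_sq_add_sq_le ha ha1 hd ?_)
  nlinarith [re_inner_sq_add_im_inner_sq_le z w]
end

section
/- Let Ω ⊆ ℂⁿ be open, F : Ω → ℂ holomorphic, and suppose ∫_Ω |F(w)|² · exp(1/dist(w, ∂Ω)) dV(w) ≤ A < ∞. Then for every boundary point y ∈ ∂Ω, lim_{z → y, z ∈ Ω} F(z) = 0. -/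
/-!
For `z ∈ Ω` let `t = dist(z, ∂Ω)`, so that the polydisc `B(z, t)` lies in `Ω` and every point of it is
within `2t` of `∂Ω`. Since `F²` is holomorphic, `|F|²` has the sub-mean value property on `B(z, t)`,
whence `|F(z)|² · vol B(z, t) · exp(1/(2t)) ≤ A`. As `vol B(z, t)` is only polynomial in `t`, this
forces `F(z) → 0` as `t → 0`, i.e. as `z` approaches the boundary.
-/

open MeasureTheory Metric Set Filter Topology
open scoped ENNReal Real

section MeanValue

variable {E : Type*} [NormedAddCommGroup E] [NormedSpace ℂ E]

theorem enorm_le_circle_lintegral_enorm {G : Type*} [NormedAddCommGroup G] [NormedSpace ℂ G]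
    [CompleteSpace G] {F : E → G} {c w : E} {r : ℝ} (hF : DifferentiableOn ℂ F (ball c r))
    (hw : w ∈ ball (0 : E) r) :
    ‖F c‖ₑ ≤ ENNReal.ofReal (2 * π)⁻¹ * ∫⁻ θ in Ioc 0 (2 * π), ‖F (c + circleMap 0 1 θ • w)‖ₑ := by
  have hdisc : DiffContOnCl ℂ (fun t : ℂ => F (c + t • w)) (ball 0 |1|) := by
    refine DifferentiableOn.diffContOnCl ?_
    rw [abs_one, closure_ball _ one_ne_zero]
    refine hF.comp (by fun_prop) fun t ht => ?_
    rw [mem_closedBall_zero_iff] at ht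
    rw [mem_ball_zero_iff] at hw
    rw [mem_ball_iff_norm, add_sub_cancel_left, norm_smul]
    nlinarith [norm_nonneg w]
  have hmean := hdisc.circleAverage
  simp only [zero_smul, add_zero] at hmean
  rw [← hmean, Real.circleAverage_def, intervalIntegral.integral_of_le (by positivity), enorm_smul,
    Real.enorm_of_nonneg (by positivity)]
  gcongr
  exact enorm_integral_le_lintegral_enorm _

variable [FiniteDimensional ℂ E] [MeasurableSpace E] [BorelSpace E]
  (μ : Measure E) [μ.IsAddHaarMeasure]

theorem measurePreserving_smul_of_norm_eq_one {u : ℂ} (hu : ‖u‖ = 1) :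
    MeasurePreserving (u • · : E → E) μ μ := by
  have hdet : LinearMap.det ((u • LinearMap.id : E →ₗ[ℂ] E).restrictScalars ℝ) = 1 := by
    rw [LinearMap.det_restrictScalars, LinearMap.det_smul, LinearMap.det_id, mul_one, map_pow,
      Algebra.norm_complex_apply, Complex.normSq_eq_norm_sq, hu]
    simp
  refine ⟨by fun_prop, ?_⟩
  have := Measure.map_linearMap_addHaar_eq_smul_addHaar μ (hdet ▸ one_ne_zero)
  rw [hdet] at this
  simpa [Pi.smul_def] using this

/-- Average `enorm_le_circle_lintegral_enorm` over `w ∈ ball 0 r`: for each `θ` the rotation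
`w ↦ e^{iθ} • w` preserves both `μ` and the ball. -/
theorem enorm_mul_addHaar_ball_le_setLIntegral_enorm {G : Type*} [NormedAddCommGroup G]
    [NormedSpace ℂ G] [CompleteSpace G] {F : E → G} {c : E} {r : ℝ}
    (hF : DifferentiableOn ℂ F (ball c r)) :
    ‖F c‖ₑ * μ (ball c r) ≤ ∫⁻ w in ball c r, ‖F w‖ₑ ∂μ := by
  have hrot (θ : ℝ) : ∫⁻ w in ball 0 r, ‖F (c + circleMap 0 1 θ • w)‖ₑ ∂μ =
      ∫⁻ w in ball 0 r, ‖F (c + w)‖ₑ ∂μ := by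
    have hu : ‖circleMap 0 1 θ‖ = 1 := by rw [norm_circleMap_zero, abs_one]
    have hemb : MeasurableEmbedding (circleMap 0 1 θ • · : E → E) :=
      (Homeomorph.smulOfNeZero _ (circleMap_ne_center one_ne_zero)).measurableEmbedding
    have hpre : (circleMap 0 1 θ • · : E → E) ⁻¹' ball 0 r = ball 0 r := by
      ext w; simp [norm_smul, hu]
    have := (measurePreserving_smul_of_norm_eq_one μ hu).setLIntegral_comp_preimage_emb hemb
      (fun w => ‖F (c + w)‖ₑ) (ball 0 r)
    rwa [hpre] at this
  have htrans : ∫⁻ w in ball 0 r, ‖F (c + w)‖ₑ ∂μ = ∫⁻ w in ball c r, ‖F w‖ₑ ∂μ := by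
    have := (measurePreserving_add_left μ c).setLIntegral_comp_preimage_emb
      (measurableEmbedding_addLeft c) (fun w => ‖F w‖ₑ) (ball c r)
    rwa [preimage_add_ball, sub_self] at this
  have hmeas : AEMeasurable (Function.uncurry fun θ w => ‖F (c + circleMap 0 1 θ • w)‖ₑ)
      ((volume.restrict (Ioc 0 (2 * π))).prod (μ.restrict (ball 0 r))) := by
    rw [Measure.prod_restrict]
    refine ContinuousOn.aemeasurable ?_ (measurableSet_Ioc.prod measurableSet_ball)
    refine continuous_enorm.comp_continuousOn (hF.continuousOn.comp (by fun_prop) ?_)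
    rintro ⟨θ, w⟩ ⟨-, hw⟩
    rw [mem_ball_zero_iff] at hw
    simpa [norm_smul] using hw
  calc ‖F c‖ₑ * μ (ball c r) = ∫⁻ _ in ball 0 r, ‖F c‖ₑ ∂μ := by
        rw [setLIntegral_const, Measure.addHaar_ball_center]
    _ ≤ ∫⁻ w in ball 0 r, (ENNReal.ofReal (2 * π)⁻¹ *
          ∫⁻ θ in Ioc 0 (2 * π), ‖F (c + circleMap 0 1 θ • w)‖ₑ) ∂μ :=
        setLIntegral_mono' measurableSet_ball fun w hw => enorm_le_circle_lintegral_enorm hF hw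
    _ = ENNReal.ofReal (2 * π)⁻¹ * ∫⁻ θ in Ioc 0 (2 * π),
          ∫⁻ w in ball 0 r, ‖F (c + circleMap 0 1 θ • w)‖ₑ ∂μ := by
        rw [lintegral_const_mul' _ _ ENNReal.ofReal_ne_top, lintegral_lintegral_swap hmeas]
    _ = ∫⁻ w in ball c r, ‖F w‖ₑ ∂μ := by
        simp_rw [hrot, htrans]
        rw [setLIntegral_const, Real.volume_Ioc, sub_zero, mul_left_comm,
          ← ENNReal.ofReal_mul (by positivity), inv_mul_cancel₀ (by positivity), ENNReal.ofReal_one,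
          mul_one]

end MeanValue

theorem ball_infDist_frontier_subset {V : Type*} [NormedAddCommGroup V] [NormedSpace ℝ V]
    {Ω : Set V} (hΩ : IsOpen Ω) {z : V} (hz : z ∈ Ω) :
    ball z (infDist z (frontier Ω)) ⊆ Ω := by
  rcases (ball z (infDist z (frontier Ω))).eq_empty_or_nonempty with h | h
  · simp [h]
  refine (convex_ball _ _).isPreconnected.subset_of_closure_inter_subset hΩ
    ⟨z, mem_ball_self (nonempty_ball.mp h), hz⟩ fun x ⟨hx, hxb⟩ => ?_
  by_contra hxΩ
  exact ball_infDist_subset_compl hxb (hΩ.frontier_eq ▸ ⟨hx, hxΩ⟩)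

theorem infDist_frontier_pos {X : Type*} [PseudoMetricSpace X] {Ω : Set X} (hΩ : IsOpen Ω)
    (hne : (frontier Ω).Nonempty) {z : X} (hz : z ∈ Ω) :
    0 < infDist z (frontier Ω) :=
  (isClosed_frontier.notMem_iff_infDist_pos hne).mp fun h => (hΩ.frontier_eq ▸ h).2 hz

theorem tendsto_pow_mul_exp_div_nhdsGT_zero (k : ℕ) {a : ℝ} (ha : 0 < a) :
    Tendsto (fun t : ℝ => t ^ k * Real.exp (a / t)) (𝓝[>] 0) atTop := by
  have hinv : Tendsto (fun t : ℝ => a / t) (𝓝[>] 0) atTop := by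
    simpa only [div_eq_mul_inv] using tendsto_inv_nhdsGT_zero.const_mul_atTop ha
  refine (((Real.tendsto_exp_div_pow_atTop k).comp hinv).const_mul_atTop (pow_pos ha k)).congr' ?_
  filter_upwards [self_mem_nhdsWithin] with t (ht : 0 < t)
  simp only [Function.comp_apply]
  field_simp
  rw [← mul_pow, div_mul_cancel₀ _ ht.ne']

section WeightedBound

variable {E : Type*} [NormedAddCommGroup E] [NormedSpace ℂ E] [FiniteDimensional ℂ E]
  [MeasurableSpace E] [BorelSpace E] (μ : Measure E) [μ.IsAddHaarMeasure]
  {Ω : Set E} {F : E → ℂ}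

theorem ofReal_sq_norm_mul_exp_mul_addHaar_ball_le (hΩ : IsOpen Ω) (hF : DifferentiableOn ℂ F Ω)
    (hne : (frontier Ω).Nonempty) {z : E} (hz : z ∈ Ω) :
    ENNReal.ofReal (‖F z‖ ^ 2 * Real.exp (1 / (2 * infDist z (frontier Ω)))) *
        μ (ball z (infDist z (frontier Ω))) ≤
      ∫⁻ w in Ω, ENNReal.ofReal (‖F w‖ ^ 2 * Real.exp (1 / infDist w (frontier Ω))) ∂μ := by
  set t := infDist z (frontier Ω)
  have hball := ball_infDist_frontier_subset hΩ hz
  have hweight : ∀ w ∈ ball z t,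
      Real.exp (1 / (2 * t)) ≤ Real.exp (1 / infDist w (frontier Ω)) := by
    intro w hw
    have hw_pos := infDist_frontier_pos hΩ hne (hball hw)
    have hw_le : infDist w (frontier Ω) ≤ 2 * t := by
      linarith [infDist_le_infDist_add_dist (x := w) (y := z) (s := frontier Ω), mem_ball.mp hw]
    gcongr
  have hmean := enorm_mul_addHaar_ball_le_setLIntegral_enorm μ ((hF.mono hball).pow 2)
  calc ENNReal.ofReal (‖F z‖ ^ 2 * Real.exp (1 / (2 * t))) * μ (ball z t)
      = ENNReal.ofReal (Real.exp (1 / (2 * t))) * (‖F z ^ 2‖ₑ * μ (ball z t)) := by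
        rw [ENNReal.ofReal_mul (by positivity), ← ofReal_norm, norm_pow,
          mul_comm (ENNReal.ofReal _), mul_assoc]
    _ ≤ ENNReal.ofReal (Real.exp (1 / (2 * t))) * ∫⁻ w in ball z t, ‖F w ^ 2‖ₑ ∂μ := by
        gcongr; exact hmean
    _ = ∫⁻ w in ball z t, ENNReal.ofReal (‖F w‖ ^ 2 * Real.exp (1 / (2 * t))) ∂μ := by
        rw [← lintegral_const_mul' _ _ ENNReal.ofReal_ne_top]
        refine lintegral_congr fun w => ?_
        rw [ENNReal.ofReal_mul (by positivity), ← ofReal_norm, norm_pow, mul_comm]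
    _ ≤ ∫⁻ w in ball z t, ENNReal.ofReal (‖F w‖ ^ 2 * Real.exp (1 / infDist w (frontier Ω))) ∂μ :=
        setLIntegral_mono' measurableSet_ball fun w hw =>
          ENNReal.ofReal_le_ofReal (mul_le_mul_of_nonneg_left (hweight w hw) (by positivity))
    _ ≤ _ := lintegral_mono_set hball

theorem sq_norm_le_div_pow_mul_exp (hΩ : IsOpen Ω) (hF : DifferentiableOn ℂ F Ω)
    (hne : (frontier Ω).Nonempty) {A : ℝ≥0∞} (hA : A ≠ ⊤)
    (hint : ∫⁻ w in Ω, ENNReal.ofReal (‖F w‖ ^ 2 * Real.exp (1 / infDist w (frontier Ω))) ∂μ ≤ A)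
    {z : E} (hz : z ∈ Ω) :
    ‖F z‖ ^ 2 ≤ (A / μ (ball 0 1)).toReal / (infDist z (frontier Ω) ^ Module.finrank ℝ E *
        Real.exp (1 / (2 * infDist z (frontier Ω)))) := by
  have ht := infDist_frontier_pos hΩ hne hz
  rw [le_div_iff₀ (by positivity)]
  have hbound := (ofReal_sq_norm_mul_exp_mul_addHaar_ball_le μ hΩ hF hne hz).trans hint
  rw [Measure.addHaar_ball_of_pos μ z ht, ← mul_assoc, ← ENNReal.ofReal_mul (by positivity),
    ← ENNReal.le_div_iff_mul_le (Or.inl (measure_ball_pos μ 0 one_pos).ne')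
      (Or.inl measure_ball_lt_top.ne), ENNReal.ofReal_le_iff_le_toReal
      (ENNReal.div_ne_top hA (measure_ball_pos μ 0 one_pos).ne')] at hbound
  exact (le_of_eq (by ring)).trans hbound

end WeightedBound

/-- if `F` is holomorphic on an open set `Ω ⊆ ℂⁿ` and
`∫_Ω |F w|² exp(1/dist(w,∂Ω)) dV ≤ A < ∞` (dV the Lebesgue measure on ℂⁿ), then
`F(z) → 0` as `z → y` within `Ω` for every boundary point `y ∈ ∂Ω`. -/
theorem stmt5 (n : ℕ) (Ω : Set (Fin n → ℂ)) (hΩ : IsOpen Ω)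
    (F : (Fin n → ℂ) → ℂ) (hF : DifferentiableOn ℂ F Ω)
    (A : ENNReal) (hA : A ≠ ⊤)
    (hint : ∫⁻ w in Ω,
        ENNReal.ofReal (‖F w‖ ^ 2 *
          Real.exp (1 / Metric.infDist w (frontier Ω))) ≤ A) :
    ∀ y ∈ frontier Ω, Filter.Tendsto F (nhdsWithin y Ω) (nhds 0) := by
  intro y hy
  have hne : (frontier Ω).Nonempty := ⟨y, hy⟩
  set k := Module.finrank ℝ (Fin n → ℂ)
  set M := (A / volume (ball (0 : Fin n → ℂ) 1)).toReal
  have hdist : Tendsto (fun z => infDist z (frontier Ω)) (𝓝[Ω] y) (𝓝[>] 0) := by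
    refine tendsto_nhdsWithin_of_tendsto_nhds_of_eventually_within _ ?_
      (eventually_nhdsWithin_of_forall fun z hz => infDist_frontier_pos hΩ hne hz)
    simpa [infDist_zero_of_mem hy] using
      ((continuous_infDist_pt (frontier Ω)).tendsto y).mono_left nhdsWithin_le_nhds
  have hdecay : Tendsto (fun t : ℝ => M / (t ^ k * Real.exp (1 / (2 * t)))) (𝓝[>] 0) (𝓝 0) :=
    tendsto_const_nhds.div_atTop <| by
      simpa only [div_mul_eq_div_div] using tendsto_pow_mul_exp_div_nhdsGT_zero k one_half_pos
  have hsq : Tendsto (fun z => ‖F z‖ ^ 2) (𝓝[Ω] y) (𝓝 0) :=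
    squeeze_zero' (Eventually.of_forall fun z => by positivity)
      (eventually_nhdsWithin_of_forall fun z hz =>
        sq_norm_le_div_pow_mul_exp volume hΩ hF hne hA hint hz) (hdecay.comp hdist)
  rw [tendsto_zero_iff_norm_tendsto_zero]
  simpa using hsq.sqrt
end

section
/- Let U = {z ∈ ℂ : |z| < 1}, n ∈ ℕ, and suppose F is holomorphic on U \ {0} such that both e^{F(z)} and F(z), multiplied by z^n, extend continuously to U (i.e., z^n·e^{F(z)} and z^n·F(z) extend continuously across 0). Writing z^n·e^{F(z)} = A(z) with A holomorphic on U, if A(z) = z^l·A'(z) with 0 ≤ l < n and A'(0) ≠ 0, then a contradiction arises; consequently A vanishes to order at least n at 0 and e^F extends holomorphically to U. -/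
open Complex Metric Filter Topology
open scoped Real

/-!
If `exp ∘ F = z ^ m * g` near `0`, with `F` continuous off `0`, `g` continuous and `g 0 ≠ 0`,
then `log (g z / g 0) + log (g 0)` is a continuous logarithm of `g` near `0`, so `z ^ m` has a
continuous logarithm `G` on a small circle of radius `r`. Along the circle,
`G (r e^{it}) - m (log r + i t)` is continuous with values in `2πiℤ`, hence constant, and
comparing `t = 0` with `t = 2π` gives `m = 0`.

Since `A = z ^ n e^F` does not vanish off `0`, it has finite order `k` at `0`:
`A = z ^ k g` with `g 0 ≠ 0`. The above applied to `e^F = z ^ (k - n) g` gives `k = n`, so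
`e^F = g` on a punctured neighbourhood of `0` and `e^F` extends holomorphically across `0`.
-/

theorem eq_zero_of_exp_eq_zpow_on_sphere {G : ℂ → ℂ} {m : ℤ} {r : ℝ} (hr : 0 < r)
    (hG : ContinuousOn G (sphere 0 r)) (h : ∀ z ∈ sphere (0 : ℂ) r, exp (G z) = z ^ m) :
    m = 0 := by
  have hc : ∀ t, circleMap 0 r t ∈ sphere (0 : ℂ) r := fun t => by simp [abs_of_pos hr]
  set w : ℝ → ℂ := fun t => G (circleMap 0 r t) - m * (Real.log r + t * I) with hw
  have hw_mem : ∀ t, w t ∈ AddSubgroup.zmultiples (2 * π * I) := by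
    intro t
    have hlog : exp (Real.log r + t * I) = circleMap 0 r t := by
      rw [exp_add, ← ofReal_exp, Real.exp_log hr, circleMap_zero]
    have hone : exp (w t) = 1 := by
      rw [hw, exp_sub, exp_int_mul, hlog, h _ (hc t), div_self (zpow_ne_zero _ ?_)]
      exact ne_zero_of_mem_sphere hr.ne' ⟨_, hc t⟩
    obtain ⟨k, hk⟩ := exp_eq_one_iff.mp hone
    exact AddSubgroup.mem_zmultiples_iff.mpr ⟨k, by rw [hk, zsmul_eq_mul]⟩
  have hw_cont : Continuous w := by
    have hGc : Continuous fun t => G (circleMap 0 r t) :=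
      hG.comp_continuous (continuous_circleMap 0 r) hc
    exact hGc.sub (continuous_const.mul (continuous_const.add
      (continuous_ofReal.mul continuous_const)))
  have hw_const : w (2 * π) = w 0 :=
    isPreconnected_univ.constant_of_mapsTo
      (SetLike.isDiscrete_iff_discreteTopology.mpr inferInstance) hw_cont.continuousOn
      (fun t _ => hw_mem t) trivial trivial
  have hturn : (m : ℂ) * (2 * π * I) = 0 := by
    have := congrArg (· - w 0) hw_const
    simp only [hw, (periodic_circleMap 0 r).eq] at this
    push_cast at this
    linear_combination -this
  simpa [Real.pi_ne_zero, I_ne_zero] using hturn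

theorem eq_zero_of_exp_eq_zpow_mul {F g : ℂ → ℂ} {m : ℤ}
    (hF : ∀ᶠ z in 𝓝[≠] 0, ContinuousAt F z) (hg : ∀ᶠ z in 𝓝 0, ContinuousAt g z)
    (hg0 : g 0 ≠ 0) (h : ∀ᶠ z in 𝓝[≠] 0, exp (F z) = z ^ m * g z) : m = 0 := by
  have hslit : ∀ᶠ z in 𝓝 0, g z / g 0 ∈ slitPlane :=
    (hg.self_of_nhds.div_const (g 0)).eventually_mem
      (by rw [div_self hg0]; exact isOpen_slitPlane.mem_nhds one_mem_slitPlane)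
  set G : ℂ → ℂ := fun z => F z - log (g z / g 0) - log (g 0)
  have hG : ∀ᶠ z in 𝓝[≠] 0, ContinuousAt G z ∧ exp (G z) = z ^ m := by
    filter_upwards [hF, nhdsWithin_le_nhds (hg.and hslit), h] with z hFz ⟨hgz, hsz⟩ hz
    have hgz0 : g z ≠ 0 := left_ne_zero_of_mul (slitPlane_ne_zero hsz)
    refine ⟨(hFz.sub ((hgz.div_const _).clog hsz)).sub continuousAt_const, ?_⟩
    rw [exp_sub, exp_sub, exp_log hg0, exp_log (slitPlane_ne_zero hsz), hz]
    field_simp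
  obtain ⟨ε, hε, hball⟩ := Metric.mem_nhdsWithin_iff.mp hG
  have hsphere : sphere (0 : ℂ) (ε / 2) ⊆ ball 0 ε ∩ {0}ᶜ := fun z hz =>
    ⟨by rw [mem_ball, mem_sphere.mp hz]; linarith,
      ne_zero_of_mem_sphere (by positivity) ⟨z, hz⟩⟩
  exact eq_zero_of_exp_eq_zpow_on_sphere (half_pos hε)
    (fun z hz => (hball (hsphere hz)).1.continuousWithinAt) (fun z hz => (hball (hsphere hz)).2)

theorem eq_of_pow_mul_exp_eq_pow_mul {F g : ℂ → ℂ} {n k : ℕ}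
    (hF : ∀ᶠ z in 𝓝[≠] 0, ContinuousAt F z) (hg : ∀ᶠ z in 𝓝 0, ContinuousAt g z)
    (hg0 : g 0 ≠ 0) (h : ∀ᶠ z in 𝓝[≠] 0, z ^ n * exp (F z) = z ^ k * g z) : k = n := by
  have hexp : ∀ᶠ z in 𝓝[≠] 0, exp (F z) = z ^ ((k : ℤ) - n) * g z := by
    filter_upwards [h, self_mem_nhdsWithin] with z hz (hz0 : z ≠ 0)
    rw [zpow_sub₀ hz0, zpow_natCast, zpow_natCast, div_mul_eq_mul_div, ← hz]
    field_simp
  have := eq_zero_of_exp_eq_zpow_mul hF hg hg0 hexp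
  omega

theorem differentiableOn_update_of_eventuallyEq {𝕜 E : Type*} [NontriviallyNormedField 𝕜]
    [DecidableEq 𝕜] [NormedAddCommGroup E] [NormedSpace 𝕜 E] {f g : 𝕜 → E} {s : Set 𝕜}
    {c : 𝕜} (hs : IsOpen s) (hf : DifferentiableOn 𝕜 f (s \ {c})) (hg : DifferentiableAt 𝕜 g c)
    (hfg : f =ᶠ[𝓝[≠] c] g) : DifferentiableOn 𝕜 (Function.update f c (g c)) s := by
  intro z hz
  refine DifferentiableAt.differentiableWithinAt ?_
  rcases eq_or_ne z c with rfl | hzc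
  · refine hg.congr_of_eventuallyEq (eventuallyEq_nhds_of_eventuallyEq_nhdsNE ?_ (by simp))
    exact (Function.update_eventuallyEq_nhdsNE f z z (g z)).trans hfg
  · have hzs : s \ {c} ∈ 𝓝 z := (hs.sdiff isClosed_singleton).mem_nhds ⟨hz, hzc⟩
    refine (hf.differentiableAt hzs).congr_of_eventuallyEq ?_
    filter_upwards [eventually_ne_nhds hzc] with w hw using Function.update_of_ne hw _ _

theorem stmt11_general (n : ℕ) (F : ℂ → ℂ)
    (hF : DifferentiableOn ℂ F (Metric.ball 0 1 \ {0}))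
    (A : ℂ → ℂ) (hA : DifferentiableOn ℂ A (Metric.ball 0 1))
    (hAF : ∀ z ∈ Metric.ball (0:ℂ) 1 \ {0}, A z = z ^ n * Complex.exp (F z)) :
    (∀ l : ℕ, l < n → ∀ A' : ℂ → ℂ, DifferentiableOn ℂ A' (Metric.ball 0 1) →
        (∀ z ∈ Metric.ball (0:ℂ) 1, A z = z ^ l * A' z) → A' 0 = 0) ∧
      ∃ g : ℂ → ℂ, DifferentiableOn ℂ g (Metric.ball 0 1) ∧
        ∀ z ∈ Metric.ball (0:ℂ) 1 \ {0}, g z = Complex.exp (F z) := by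
  have hU : ball (0 : ℂ) 1 ∈ 𝓝 0 := ball_mem_nhds 0 one_pos
  have hU' : ball (0 : ℂ) 1 \ {0} ∈ 𝓝[≠] 0 := sdiff_mem_nhdsWithin_compl hU _
  have hFc : ∀ᶠ z in 𝓝[≠] 0, ContinuousAt F z := eventually_of_mem hU' fun z hz =>
    (hF.differentiableAt ((isOpen_ball.sdiff isClosed_singleton).mem_nhds hz)).continuousAt
  have hAF' : ∀ᶠ z in 𝓝[≠] 0, A z = z ^ n * exp (F z) := eventually_of_mem hU' hAF
  constructor
  · intro l hl A' hA' hfac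
    by_contra hA'0
    refine hl.ne (eq_of_pow_mul_exp_eq_pow_mul hFc ?_ hA'0 ?_)
    · exact eventually_of_mem hU fun z hz =>
        hA'.continuousOn.continuousAt (isOpen_ball.mem_nhds hz)
    · filter_upwards [hAF', nhdsWithin_le_nhds hU] with z h1 h2
      rw [← h1, hfac z h2]
  have hA0 : ¬∀ᶠ z in 𝓝 0, A z = 0 := fun hzero => by
    obtain ⟨z, hz0, hAz, hAz'⟩ :=
      ((eventually_mem_nhdsWithin (s := {0}ᶜ)).and (hAF'.and (nhdsWithin_le_nhds hzero))).exists
    exact mul_ne_zero (pow_ne_zero n hz0) (exp_ne_zero _) (hAz ▸ hAz')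
  obtain ⟨k, g, hg, hg0, hAg⟩ :=
    (hA.analyticAt hU).exists_eventuallyEq_pow_smul_nonzero_iff.mpr hA0
  simp only [sub_zero, smul_eq_mul] at hAg
  obtain rfl : k = n := eq_of_pow_mul_exp_eq_pow_mul hFc
    (hg.eventually_analyticAt.mono fun z hz => hz.continuousAt) hg0
    (by filter_upwards [hAF', nhdsWithin_le_nhds hAg] with z h1 h2; rw [← h1, h2])
  refine ⟨Function.update (fun z => exp (F z)) 0 (g 0),
    differentiableOn_update_of_eventuallyEq isOpen_ball hF.cexp hg.differentiableAt ?_,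
    fun z hz => Function.update_of_ne hz.2 _ _⟩
  filter_upwards [hAF', nhdsWithin_le_nhds hAg, self_mem_nhdsWithin] with z h1 h2 (hz : z ≠ 0)
  exact mul_left_cancel₀ (pow_ne_zero k hz) (h1 ▸ h2)

/-- order/monodromy argument in one variable: suppose `F` is holomorphic on
the punctured unit disk `U \ {0}` and both `z^n e^{F z}` and `z^n F z` extend continuously
across `0`, with `A` holomorphic on `U` agreeing with `z^n e^{F z}` on `U \ {0}`. Then `A`
cannot factor as `A = z^l A'` with `l < n`, `A'` holomorphic, `A' 0 ≠ 0` (so `A` vanishes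
to order at least `n` at `0`), and `e^F` extends holomorphically to `U`. -/
theorem stmt11 (n : ℕ) (F : ℂ → ℂ)
    (hF : DifferentiableOn ℂ F (Metric.ball 0 1 \ {0}))
    (A : ℂ → ℂ) (hA : DifferentiableOn ℂ A (Metric.ball 0 1))
    (hAF : ∀ z ∈ Metric.ball (0:ℂ) 1 \ {0}, A z = z ^ n * Complex.exp (F z))
    (B : ℂ → ℂ) (hB : ContinuousOn B (Metric.ball 0 1))
    (hBF : ∀ z ∈ Metric.ball (0:ℂ) 1 \ {0}, B z = z ^ n * F z) :
    (∀ l : ℕ, l < n → ∀ A' : ℂ → ℂ, DifferentiableOn ℂ A' (Metric.ball 0 1) →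
        (∀ z ∈ Metric.ball (0:ℂ) 1, A z = z ^ l * A' z) → A' 0 = 0) ∧
      ∃ g : ℂ → ℂ, DifferentiableOn ℂ g (Metric.ball 0 1) ∧
        ∀ z ∈ Metric.ball (0:ℂ) 1 \ {0}, g z = Complex.exp (F z) :=
  stmt11_general n F hF A hA hAF
end
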